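/- arXiv:1201.6356 — 2 statements merged into one kernel-verified Lean document; each statement's English description precedes it below -/
import Mathlib

section
/- In the region {r > 0, p_ψ ≠ 0} of the phase space of the planar Kepler problem, the coordinates φ = ψ - 2 r p_r / p_ψ, I = p_ψ, q = ln(k m² r / p_ψ²), p = r p_r are canonical: dI ∧ dφ + dp ∧ dq = dp_ψ ∧ dψ + dp_r ∧ dr. -/
/-!
With `I = p_ψ` and `p = r p_r` we have `φ = ψ - 2 p / I` and `dq = dr / r - 2 dI / I`, hence
`dI ∧ dφ = dp_ψ ∧ dψ - 2 dI ∧ dp / I` and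
`dp ∧ dq = (p_r dr + r dp_r) ∧ dr / r - 2 dp ∧ dI / I = dp_r ∧ dr - 2 dp ∧ dI / I`,
so the two correction terms cancel. In coordinates: compute the Jacobian of the chart from
directional derivatives and check a rational identity.
-/

/-- A point `w` of phase space has coordinates `w 0 = ψ`, `w 1 = r`, `w 2 = p_ψ`, `w 3 = p_r`;
the components of the chart are `φ, I, q, p`. -/
noncomputable def keplerChart (k m : ℝ) (w : Fin 4 → ℝ) : Fin 4 → ℝ :=
  ![w 0 - 2 * w 1 * w 3 / w 2, w 2, Real.log (k * m ^ 2 * w 1 / w 2 ^ 2), w 1 * w 3]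

section keplerChart

variable {k m : ℝ} {z : Fin 4 → ℝ}

theorem differentiableAt_keplerChart (hk : k ≠ 0) (hm : m ≠ 0) (hr : z 1 ≠ 0)
    (hψ : z 2 ≠ 0) : DifferentiableAt ℝ (keplerChart k m) z := by
  rw [differentiableAt_pi]
  intro i
  fin_cases i <;>
    simp only [keplerChart, Fin.zero_eta, Fin.mk_one, Fin.reduceFinMk, Matrix.cons_val] <;>
    fun_prop (disch := simp [*])

theorem fderiv_keplerChart_apply (hk : k ≠ 0) (hm : m ≠ 0) (hr : z 1 ≠ 0) (hψ : z 2 ≠ 0)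
    (u : Fin 4 → ℝ) :
    fderiv ℝ (keplerChart k m) z u =
      ![u 0 - 2 * (u 1 * z 3 + z 1 * u 3) / z 2 + 2 * z 1 * z 3 * u 2 / z 2 ^ 2, u 2,
        u 1 / z 1 - 2 * u 2 / z 2, u 1 * z 3 + z 1 * u 3] := by
  rw [← (differentiableAt_keplerChart hk hm hr hψ).lineDeriv_eq_fderiv]
  refine HasLineDerivAt.lineDeriv ?_
  have hc (i : Fin 4) : HasDerivAt (fun t => z i + t * u i) (u i) 0 := by
    simpa using ((hasDerivAt_id 0).mul_const (u i)).const_add (z i)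
  rw [HasLineDerivAt, hasDerivAt_pi]
  intro i
  fin_cases i <;> simp only [Fin.zero_eta, Fin.mk_one, Fin.reduceFinMk, Matrix.cons_val]
  · refine ((hc 0).fun_sub ((((hc 1).const_mul 2).fun_mul (hc 3)).fun_div (hc 2)
      (by simpa))).congr_deriv ?_
    simp only [zero_mul, add_zero]
    field_simp
    ring
  · exact hc 2
  · refine ((((hc 1).const_mul (k * m ^ 2)).fun_div ((hc 2).fun_pow 2)
      (by simpa)).log (by simp [*])).congr_deriv ?_
    simp only [zero_mul, add_zero, Nat.cast_ofNat, Nat.add_one_sub_one, pow_one]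
    field_simp
  · refine ((hc 1).fun_mul (hc 3)).congr_deriv ?_
    simp only [zero_mul, add_zero]

end keplerChart

/-- The coordinates `φ = ψ - 2 r p_r / p_ψ`, `I = p_ψ`, `q = ln(k m² r / p_ψ²)`,
`p = r p_r` on the region `{r > 0, p_ψ ≠ 0}` of the phase space of the planar Kepler
problem are canonical: the pullback of `dI ∧ dφ + dp ∧ dq` under the coordinate map
equals `dp_ψ ∧ dψ + dp_r ∧ dr`.  Here a point `z : Fin 4 → ℝ` has coordinates
`z 0 = ψ`, `z 1 = r`, `z 2 = p_ψ`, `z 3 = p_r`. -/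
theorem stmt5 (m k : ℝ) (hm : 0 < m) (hk : 0 < k)
    (z : Fin 4 → ℝ) (hr : 0 < z 1) (hpsi : z 2 ≠ 0) (u v : Fin 4 → ℝ) :
    let Φ : (Fin 4 → ℝ) → (Fin 4 → ℝ) := fun w =>
      ![w 0 - 2 * w 1 * w 3 / w 2, w 2, Real.log (k * m ^ 2 * w 1 / (w 2) ^ 2),
        w 1 * w 3]
    let a := fderiv ℝ Φ z u
    let b := fderiv ℝ Φ z v
    (a 1 * b 0 - b 1 * a 0) + (a 3 * b 2 - b 3 * a 2) =
      (u 2 * v 0 - v 2 * u 0) + (u 3 * v 1 - v 3 * u 1) := by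
  intro Φ a b
  have hΦ (x : Fin 4 → ℝ) : fderiv ℝ Φ z x = _ :=
    fderiv_keplerChart_apply hk.ne' hm.ne' hr.ne' hpsi x
  simp only [a, b, hΦ, Matrix.cons_val]
  field_simp
  ring
end

section
/- For κ ∈ ℤ∖{-1,0} let r_κ = ((κ+1)/κ)^{2/3} and c_κ = (√r_κ/π) ∫_{-π}^{π} g_κ(t) cos(κt) dt, where g_κ(t) = (r_κ + 1/r_κ + (r_κ + 3cos t)/(2κ)) / (r_κ + 1/r_κ - 2 cos t)^{3/2}. Then c_κ > 0. -/
/-!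
For `A > 2` and `s > 0` the binomial series gives
`(A - 2 cos t)^(-s) = A^(-s) ∑ₖ choose(s + k - 1, k) (2/A)^k cosᵏ t` with positive coefficients,
and the moments `∫ cosᵏ t cos (n t)` over `[-π, π]` are nonnegative (by the product-to-sum
recursion), and positive for `k = n`. Hence every cosine coefficient of `(A - 2 cos t)^(-s)` is
positive. With `A = r + 1/r > 2`, the function `g_κ(t) cos (κ t)` is a positive combination of
such functions: for `κ > 0` use `2 cos t cos (κ t) = cos ((κ + 1) t) + cos ((κ - 1) t)`, and for
`κ ≤ -2` use `2 cos t = A - (A - 2 cos t)`.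
-/

open Real intervalIntegral

lemma Ring.choose_add_sub_one_pos {K : Type*} [Field K] [LinearOrder K] [IsStrictOrderedRing K]
    {s : K} (hs : 0 < s) (n : ℕ) : 0 < Ring.choose (s + n - 1) n := by
  rw [Ring.choose_eq_smul, Polynomial.descPochhammer_smeval_eq_ascPochhammer,
    Polynomial.ascPochhammer_smeval_eq_eval, smul_eq_mul]
  have := ascPochhammer_pos n (s + n - 1 - n + 1) (by linarith)
  positivity

lemma Real.hasSum_one_div_one_sub_rpow {s x : ℝ} (hx : |x| < 1) :
    HasSum (fun n : ℕ => Ring.choose (s + n - 1) n * x ^ n) (1 / (1 - x) ^ s) := by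
  have := (one_div_one_sub_rpow_hasFPowerSeriesOnBall_zero s).hasSum
    (y := x) (by simpa [enorm_eq_nnnorm, ← NNReal.coe_lt_coe] using hx)
  simpa [FormalMultilinearSeries.ofScalars_apply_eq, mul_comm] using this

noncomputable def cosMoment (k n : ℕ) : ℝ := ∫ t in (-π)..π, cos t ^ k * cos (n * t)

lemma cosMoment_zero_zero : cosMoment 0 0 = 2 * π := by
  simp [cosMoment, two_mul]

lemma cosMoment_zero_succ (n : ℕ) : cosMoment 0 (n + 1) = 0 := by
  have hn : ((n + 1 : ℕ) : ℝ) ≠ 0 := by positivity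
  simp only [cosMoment, pow_zero, one_mul]
  rw [integral_comp_mul_left (fun x => cos x) hn, integral_cos, mul_neg, sin_neg,
    sin_nat_mul_pi]
  simp

lemma cosMoment_succ_zero (k : ℕ) : cosMoment (k + 1) 0 = cosMoment k 1 := by
  simp [cosMoment, pow_succ]

lemma cosMoment_succ_succ (k n : ℕ) :
    cosMoment (k + 1) (n + 1) = (cosMoment k (n + 2) + cosMoment k n) / 2 := by
  have integrable (m : ℕ) :
      IntervalIntegrable (fun t => cos t ^ k * cos (m * t)) MeasureTheory.volume (-π) π :=
    (by fun_prop : Continuous fun t => cos t ^ k * cos (m * t)).intervalIntegrable _ _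
  rw [cosMoment, cosMoment, cosMoment, ← integral_add (integrable _) (integrable _),
    ← integral_div]
  refine integral_congr fun t _ => ?_
  push_cast
  rw [show ((n : ℝ) + 2) * t = (n + 1) * t + t by ring, show (n : ℝ) * t = (n + 1) * t - t by ring,
    cos_add, cos_sub]
  ring

lemma cosMoment_nonneg (k n : ℕ) : 0 ≤ cosMoment k n := by
  induction k generalizing n with
  | zero =>
    cases n with
    | zero => rw [cosMoment_zero_zero]; positivity
    | succ n => rw [cosMoment_zero_succ]
  | succ k ih =>
    cases n with
    | zero => rw [cosMoment_succ_zero]; exact ih 1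
    | succ n => rw [cosMoment_succ_succ]; linarith [ih (n + 2), ih n]

lemma cosMoment_self_pos (n : ℕ) : 0 < cosMoment n n := by
  induction n with
  | zero => rw [cosMoment_zero_zero]; positivity
  | succ n ih => rw [cosMoment_succ_succ]; linarith [cosMoment_nonneg n (n + 2)]

open MeasureTheory in
lemma hasSum_mul_cosMoment {c : ℕ → ℝ} {f : ℝ → ℝ} (hc : ∀ k, 0 ≤ c k)
    (hf : ∀ x ∈ Set.Icc (-1 : ℝ) 1, HasSum (fun k => c k * x ^ k) (f x)) (n : ℕ) :
    HasSum (fun k => c k * cosMoment k n) (∫ t in (-π)..π, f (cos t) * cos (n * t)) := by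
  have hsum : Summable c := by simpa using (hf 1 (by norm_num)).summable
  have key := intervalIntegral.hasSum_integral_of_dominated_convergence (μ := volume)
    (a := -π) (b := π) (F := fun k t => c k * (cos t ^ k * cos (n * t))) (fun k _ => c k)
    (fun k => by fun_prop)
    (fun k => Filter.Eventually.of_forall fun t _ => by
      rw [norm_mul, Real.norm_of_nonneg (hc k)]
      refine mul_le_of_le_one_right (hc k) ?_
      rw [norm_mul, norm_pow]
      exact mul_le_one₀ (pow_le_one₀ (norm_nonneg _) (abs_cos_le_one t)) (norm_nonneg _)
        (abs_cos_le_one _))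
    (Filter.Eventually.of_forall fun _ _ => hsum) intervalIntegrable_const
    (Filter.Eventually.of_forall fun t _ => by
      simpa [mul_assoc] using
        (hf (cos t) ⟨neg_one_le_cos t, cos_le_one t⟩).mul_right (cos (n * t)))
  simpa only [intervalIntegral.integral_const_mul, cosMoment] using key

lemma integral_comp_cos_mul_cos_pos {c : ℕ → ℝ} {f : ℝ → ℝ} {n : ℕ} (hc : ∀ k, 0 ≤ c k)
    (hcn : 0 < c n) (hf : ∀ x ∈ Set.Icc (-1 : ℝ) 1, HasSum (fun k => c k * x ^ k) (f x)) :
    0 < ∫ t in (-π)..π, f (cos t) * cos (n * t) :=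
  calc 0 < c n * cosMoment n n := mul_pos hcn (cosMoment_self_pos n)
    _ ≤ _ := le_hasSum (hasSum_mul_cosMoment hc hf n) n
        fun k _ => mul_nonneg (hc k) (cosMoment_nonneg k n)

lemma integral_rpow_neg_mul_cos_pos {A s : ℝ} (hA : 2 < A) (hs : 0 < s) (m : ℤ) :
    0 < ∫ t in (-π)..π, (A - 2 * cos t) ^ (-s) * cos (m * t) := by
  have hA0 : 0 < A := by linarith
  have hcos (t : ℝ) : cos (m * t) = cos (m.natAbs * t) := by
    rcases abs_choice (m : ℝ) with h | h <;>
      simp only [Nat.cast_natAbs, Int.cast_abs, h, neg_mul, cos_neg]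
  simp only [hcos]
  refine integral_comp_cos_mul_cos_pos (f := fun x => (A - 2 * x) ^ (-s))
    (c := fun k => A ^ (-s) * (Ring.choose (s + k - 1) k * (2 / A) ^ k))
    (fun k => by have := Ring.choose_add_sub_one_pos hs k; positivity)
    (by have := Ring.choose_add_sub_one_pos hs m.natAbs; positivity) fun x hx => ?_
  have hx' : |2 / A * x| < 1 := by
    rw [abs_mul, abs_of_pos (by positivity), div_mul_eq_mul_div, div_lt_one hA0]
    nlinarith [abs_le.mpr hx]
  have h1 : 0 < 1 - 2 / A * x := by linarith [(abs_lt.mp hx').2]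
  have hval : (A - 2 * x) ^ (-s) = A ^ (-s) * (1 / (1 - 2 / A * x) ^ s) := by
    rw [one_div, ← rpow_neg h1.le, ← mul_rpow hA0.le h1.le]
    congr 1
    field_simp
  rw [hval]
  refine ((hasSum_one_div_one_sub_rpow hx').mul_left _).congr_fun fun k => ?_
  rw [mul_pow]
  ring

lemma integral_sum_rpow_neg_mul_cos_pos {ι : Type*} {s : Finset ι} (hs : s.Nonempty) {A : ℝ}
    (hA : 2 < A) {c σ : ι → ℝ} {m : ι → ℤ} (hc : ∀ i ∈ s, 0 < c i) (hσ : ∀ i ∈ s, 0 < σ i) :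
    0 < ∫ t in (-π)..π, ∑ i ∈ s, c i * ((A - 2 * cos t) ^ (-σ i) * cos (m i * t)) := by
  have hD (t : ℝ) : A - 2 * cos t ≠ 0 := by linarith [cos_le_one t]
  have hcont (i : ι) : Continuous fun t => c i * ((A - 2 * cos t) ^ (-σ i) * cos (m i * t)) := by
    have : Continuous fun t => A - 2 * cos t := by fun_prop
    exact continuous_const.mul ((this.rpow_const fun t => Or.inl (hD t)).mul (by fun_prop))
  rw [integral_finsetSum fun i _ => (hcont i).intervalIntegrable (-π) π]
  refine Finset.sum_pos (fun i hi => ?_) hs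
  rw [intervalIntegral.integral_const_mul]
  exact mul_pos (hc i hi) (integral_rpow_neg_mul_cos_pos hA (hσ i hi) (m i))

/-- The function `g_κ`, with `r_κ` replaced by a free parameter `r`. -/
noncomputable def g (r κ t : ℝ) : ℝ :=
  (r + 1 / r + (r + 3 * cos t) / (2 * κ)) / (r + 1 / r - 2 * cos t) ^ ((3 : ℝ) / 2)

lemma integral_g_mul_cos_pos_of_pos {r : ℝ} (hr : 0 < r) (hA : 2 < r + 1 / r) {κ : ℤ}
    (hκ : 0 < κ) : 0 < ∫ t in (-π)..π, g r κ t * cos (κ * t) := by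
  have hκ' : (0 : ℝ) < κ := by exact_mod_cast hκ
  have hκ0 : (κ : ℝ) ≠ 0 := hκ'.ne'
  convert integral_sum_rpow_neg_mul_cos_pos (s := Finset.univ) Finset.univ_nonempty hA
    (c := ![r + 1 / r + r / (2 * κ), 3 / (4 * κ), 3 / (4 * κ)]) (σ := fun _ => 3 / 2)
    (m := ![κ, κ + 1, κ - 1])
    (fun i _ => by
      fin_cases i <;>
        simp only [Fin.zero_eta, Fin.mk_one, Fin.reduceFinMk, Matrix.cons_val] <;> positivity)
    (by norm_num) using 1
  refine integral_congr fun t _ => ?_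
  have hD : 0 < r + 1 / r - 2 * cos t := by linarith [cos_le_one t]
  simp only [g, Fin.sum_univ_three, Matrix.cons_val_zero, Matrix.cons_val_one,
    Matrix.cons_val_two, Matrix.head_cons, Matrix.tail_cons, rpow_neg hD.le]
  push_cast
  rw [show ((κ : ℝ) + 1) * t = κ * t + t by ring, show ((κ : ℝ) - 1) * t = κ * t - t by ring,
    cos_add, cos_sub]
  field_simp
  ring

lemma integral_g_mul_cos_pos_of_le_neg_two {r : ℝ} (hr : 0 < r) (hA : 2 < r + 1 / r) {κ : ℤ}
    (hκ : κ ≤ -2) : 0 < ∫ t in (-π)..π, g r κ t * cos (κ * t) := by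
  have hκ' : (κ : ℝ) ≤ -2 := by exact_mod_cast hκ
  have hκ0 : (κ : ℝ) ≠ 0 := by linarith
  have hc : 0 < ((r + 1 / r) * (4 * κ + 3) + 2 * r) / (4 * κ) := by
    refine div_pos_of_neg_of_neg ?_ (by linarith)
    nlinarith [one_div_pos.2 hr]
  convert integral_sum_rpow_neg_mul_cos_pos (s := Finset.univ) Finset.univ_nonempty hA
    (c := ![((r + 1 / r) * (4 * κ + 3) + 2 * r) / (4 * κ), -3 / (4 * κ)])
    (σ := ![3 / 2, 1 / 2]) (m := fun _ => κ)
    (by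
      simp only [Fin.forall_fin_two, Finset.mem_univ, forall_const]
      exact ⟨hc, div_pos_of_neg_of_neg (by norm_num) (by linarith)⟩)
    (by simp [Fin.forall_fin_succ]) using 1
  refine integral_congr fun t _ => ?_
  have hD : 0 < r + 1 / r - 2 * cos t := by linarith [cos_le_one t]
  have h12 : (r + 1 / r - 2 * cos t) ^ (-(1 / 2 : ℝ)) =
      (r + 1 / r - 2 * cos t) * ((r + 1 / r - 2 * cos t) ^ (3 / 2 : ℝ))⁻¹ := by
    rw [← rpow_neg hD.le, ← rpow_one_add' hD.le (by norm_num)]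
    norm_num
  simp only [g, Fin.sum_univ_two, Matrix.cons_val_zero, Matrix.cons_val_one]
  rw [h12, rpow_neg hD.le]
  field_simp
  ring

lemma two_lt_add_one_div {r : ℝ} (hr : 0 < r) (hr1 : r ≠ 1) : 2 < r + 1 / r := by
  have : 0 < (r - 1) ^ 2 / r := div_pos (sq_pos_of_ne_zero (sub_ne_zero.2 hr1)) hr
  rw [show (r - 1) ^ 2 / r = r + 1 / r - 2 by field_simp; ring] at this
  linarith

lemma Int.cast_add_one_div_pos {κ : ℤ} (h0 : κ ≠ 0) (h1 : κ ≠ -1) :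
    0 < ((κ : ℝ) + 1) / κ := by
  obtain hκ | hκ : κ ≤ -2 ∨ 0 < κ := by omega
  · have : (κ : ℝ) ≤ -2 := by exact_mod_cast hκ
    exact div_pos_of_neg_of_neg (by linarith) (by linarith)
  · have : (0 : ℝ) < κ := by exact_mod_cast hκ
    positivity

/-- Positivity of the coefficients `c_κ` for `κ ∈ ℤ ∖ {-1, 0}`:
`c_κ = (√r_κ/π) ∫_{-π}^{π} g_κ(t) cos(κt) dt > 0`, where `r_κ = ((κ+1)/κ)^{2/3}` and
`g_κ(t) = (r_κ + 1/r_κ + (r_κ + 3cos t)/(2κ)) / (r_κ + 1/r_κ - 2cos t)^{3/2}`. -/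
theorem stmt18 (κ : ℤ) (h0 : κ ≠ 0) (h1 : κ ≠ -1) :
    let r : ℝ := (((κ : ℝ) + 1) / (κ : ℝ)) ^ ((2 : ℝ) / 3)
    0 < Real.sqrt r / Real.pi *
        ∫ t in (-Real.pi)..Real.pi,
          (r + 1 / r + (r + 3 * Real.cos t) / (2 * (κ : ℝ))) /
              (r + 1 / r - 2 * Real.cos t) ^ ((3 : ℝ) / 2) *
            Real.cos ((κ : ℝ) * t) := by
  intro r
  have hq := Int.cast_add_one_div_pos h0 h1
  have hr : 0 < r := rpow_pos_of_pos hq _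
  have hr1 : r ≠ 1 := fun h => by
    rw [← one_rpow (2 / 3 : ℝ), rpow_left_inj hq.le zero_le_one (by norm_num),
      div_eq_one_iff_eq (by exact_mod_cast h0)] at h
    linarith
  have hA := two_lt_add_one_div hr hr1
  refine mul_pos (div_pos (sqrt_pos.2 hr) pi_pos) ?_
  obtain hκ | hκ : κ ≤ -2 ∨ 0 < κ := by omega
  · exact integral_g_mul_cos_pos_of_le_neg_two hr hA hκ
  · exact integral_g_mul_cos_pos_of_pos hr hA hκ
end
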